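/- Let A be a perfectoid-type setup: A is a p-torsion free ring, p-adically separated, containing a compatible system of p-power roots p^{1/pⁿ}, equipped with a ring endomorphism Φ fixing all p^{1/pⁿ} and inducing an injective endomorphism of A/pA, with A totally integrally closed in A[1/p]. Let C be the direct limit of A along Φ. Then the p-adic completion Ĉ is p-torsion free and totally integrally closed in Ĉ[1/p]. -/

import Mathlib

/-- `A` is totally integrally closed in `A[1/p]`. -/
def TotallyIntegrallyClosedAwayP (p : ℕ) (A : Type*) [CommRing A] : Prop :=
  ∀ α : Localization.Away (p : A),
    (∃ N : ℕ, ∀ n : ℕ, ∃ a : A,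
      algebraMap A (Localization.Away (p : A)) ((p : A) ^ N) * α ^ n =
        algebraMap A (Localization.Away (p : A)) a) →
    ∃ a : A, algebraMap A (Localization.Away (p : A)) a = α

/-!
For `p` a non-zero-divisor, total integral closedness in `R[1/p]` is the divisibility criterion
`(∀ n, p ^ (s * n) ∣ p ^ N * x ^ n) → p ^ s ∣ x`. It descends along `g n : A → C` because
`Φ` is injective mod `p`, so that `p ^ m ∣ g n a` forces `p ^ m ∣ a`.

In the completion, divisibility by `p ^ t` is read off the terms of index `≥ t` of a Cauchy
sequence, one power of `p` at a time, so `∀ n, p ^ (s * n) ∣ p ^ N * x ^ n` does not transfer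
directly. The roots `π k` of `p` repair this: root-closedness turns it into
`p ^ s ∣ π k ^ N * x` for every `k`, which transfers to each term `y` of index `≥ s` and there
gives back `p ^ (s * n) ∣ p * y ^ n` for all `n`, hence `p ^ s ∣ y`.
-/

section Localization

variable {R : Type*} [CommRing R] {p : ℕ}

theorem algebraMap_away_injective (hp : IsLeftRegular (p : R)) :
    Function.Injective (algebraMap R (Localization.Away (p : R))) :=
  IsLocalization.injective _ <| Submonoid.powers_le.mpr
    (isLeftRegular_iff_isRegular.mp hp).mem_nonZeroDivisors

theorem algebraMap_mul_pow_eq_algebraMap_iff (hp : IsLeftRegular (p : R))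
    {α : Localization.Away (p : R)} {x : R} {s : ℕ}
    (hα : α * algebraMap R _ ((p : R) ^ s) = algebraMap R _ x) (N n : ℕ) (b : R) :
    algebraMap R _ ((p : R) ^ N) * α ^ n = algebraMap R _ b ↔
      (p : R) ^ N * x ^ n = p ^ (s * n) * b := by
  have hunit : IsUnit (algebraMap R (Localization.Away (p : R)) ((p : R) ^ (s * n))) :=
    IsLocalization.map_units _ (⟨_, s * n, rfl⟩ : Submonoid.powers (p : R))
  rw [← hunit.mul_right_inj, ← (algebraMap_away_injective hp).eq_iff, map_mul, map_mul,
    map_pow _ x, ← hα, pow_mul, map_pow]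
  constructor <;> intro h <;> linear_combination h

theorem totallyIntegrallyClosedAwayP_iff (hp : IsLeftRegular (p : R)) :
    TotallyIntegrallyClosedAwayP p R ↔
      ∀ (x : R) (s N : ℕ), (∀ n, (p : R) ^ (s * n) ∣ p ^ N * x ^ n) →
        (p : R) ^ s ∣ x := by
  constructor
  · intro h x s N hx
    have hα := IsLocalization.mk'_spec (Localization.Away (p : R)) x
      (⟨_, s, rfl⟩ : Submonoid.powers (p : R))
    obtain ⟨a, ha⟩ := h _ ⟨N, fun n => (hx n).imp fun b hb =>
      (algebraMap_mul_pow_eq_algebraMap_iff hp hα N n b).mpr hb⟩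
    refine ⟨a, ?_⟩
    simpa using (algebraMap_mul_pow_eq_algebraMap_iff hp hα 0 1 a).mp (by simpa using ha.symm)
  · rintro h α ⟨N, hN⟩
    obtain ⟨⟨x, _, s, rfl⟩, hα⟩ := IsLocalization.surj (Submonoid.powers (p : R)) α
    obtain ⟨y, rfl⟩ := h x s N fun n => (hN n).imp fun b hb =>
      (algebraMap_mul_pow_eq_algebraMap_iff hp hα N n b).mp hb
    exact ⟨y, by simpa using ((algebraMap_mul_pow_eq_algebraMap_iff hp hα 0 1 y).mpr
      (by simp)).symm⟩

end Localization

namespace TotallyIntegrallyClosedAwayP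

variable {R : Type*} [CommRing R] {p : ℕ}

theorem pow_dvd (h : TotallyIntegrallyClosedAwayP p R) (hp : IsLeftRegular (p : R))
    {x : R} {s : ℕ} (N : ℕ) (hx : ∀ n, (p : R) ^ (s * n) ∣ p ^ N * x ^ n) :
    (p : R) ^ s ∣ x :=
  (totallyIntegrallyClosedAwayP_iff hp).mp h x s N hx

theorem pow_dvd_of_pow_dvd_pow (h : TotallyIntegrallyClosedAwayP p R)
    (hp : IsLeftRegular (p : R)) {x : R} {t q : ℕ} (hq : q ≠ 0)
    (hx : (p : R) ^ (t * q) ∣ x ^ q) : (p : R) ^ t ∣ x := by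
  refine h.pow_dvd hp (t * (q - 1)) fun n => ?_
  obtain ⟨d, r, hr, rfl⟩ : ∃ d r, r < q ∧ n = q * d + r :=
    ⟨n / q, n % q, Nat.mod_lt n (Nat.pos_of_ne_zero hq), (Nat.div_add_mod n q).symm⟩
  calc (p : R) ^ (t * (q * d + r)) ∣ (p : R) ^ (t * q * d) * p ^ (t * (q - 1)) := by
        rw [← pow_add, mul_add, ← mul_assoc]
        exact pow_dvd_pow _ (Nat.add_le_add_left (Nat.mul_le_mul_left t (by omega)) _)
    _ ∣ (x ^ q) ^ d * p ^ (t * (q - 1)) * x ^ r :=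
        (mul_dvd_mul (by rw [pow_mul]; exact pow_dvd_pow_of_dvd hx d) dvd_rfl).trans
          (dvd_mul_right _ _)
    _ = p ^ (t * (q - 1)) * x ^ (q * d + r) := by
        rw [pow_add, pow_mul]; ring

theorem pow_dvd_of_forall_pow_dvd_root_mul (h : TotallyIntegrallyClosedAwayP p R)
    (hp : IsLeftRegular (p : R)) (hp1 : 1 < p) {ϖ : ℕ → R} (hϖ : ∀ k, ϖ k ^ p ^ k = p)
    {y : R} {s N : ℕ} (hy : ∀ k, (p : R) ^ s ∣ ϖ k ^ N * y) : (p : R) ^ s ∣ y := by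
  refine h.pow_dvd hp 1 fun n => ?_
  have hk : N * n ≤ p ^ (N * n) := (Nat.lt_pow_self hp1).le
  calc (p : R) ^ (s * n) ∣ (ϖ (N * n) ^ N * y) ^ n := by
        rw [pow_mul]; exact pow_dvd_pow_of_dvd (hy _) n
    _ ∣ ϖ (N * n) ^ (p ^ (N * n) - N * n) * (ϖ (N * n) ^ N * y) ^ n := dvd_mul_left _ _
    _ = p ^ 1 * y ^ n := by
        rw [pow_one, ← hϖ (N * n), mul_pow, ← pow_mul, ← mul_assoc, ← pow_add,
          Nat.sub_add_cancel hk]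

end TotallyIntegrallyClosedAwayP

section DirectLimit

variable {A B C : Type*} [CommRing A] [CommRing B] [CommRing C] {p : ℕ}

theorem pow_dvd_of_pow_dvd_map (ψ : A →+* B) (hp : IsLeftRegular (p : B))
    (hψ : ∀ a, (p : B) ∣ ψ a → (p : A) ∣ a) :
    ∀ (m : ℕ) {a : A}, (p : B) ^ m ∣ ψ a → (p : A) ^ m ∣ a
  | 0, _, _ => by simp
  | m + 1, a, hm => by
    obtain ⟨a, rfl⟩ := hψ a ((dvd_pow_self _ m.succ_ne_zero).trans hm)
    rw [map_mul, map_natCast, pow_succ', hp.dvd_cancel_left] at hm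
    rw [pow_succ']
    exact mul_dvd_mul_left _ (pow_dvd_of_pow_dvd_map ψ hp hψ m hm)

theorem dvd_of_dvd_iterate {Φ : A →+* A} (hΦ : ∀ a, (p : A) ∣ Φ a → (p : A) ∣ a) :
    ∀ (m : ℕ) {a : A}, (p : A) ∣ Φ^[m] a → (p : A) ∣ a
  | 0, _, ha => ha
  | m + 1, a, ha => hΦ a (dvd_of_dvd_iterate hΦ m ha)

structure IsDirectLimitAlong (Φ : A →+* A) (g : ℕ → A →+* C) : Prop where
  comp_eq : ∀ n, (g (n + 1)).comp Φ = g n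
  exists_eq : ∀ x : C, ∃ n a, g n a = x
  exists_iterate_eq_zero : ∀ n a, g n a = 0 → ∃ m, Φ^[m] a = 0

namespace IsDirectLimitAlong

variable {Φ : A →+* A} {g : ℕ → A →+* C}

theorem map_iterate (h : IsDirectLimitAlong Φ g) (n : ℕ) :
    ∀ (m : ℕ) (a : A), g (n + m) (Φ^[m] a) = g n a
  | 0, _ => rfl
  | m + 1, a => by
    rw [Function.iterate_succ_apply', ← add_assoc, ← RingHom.comp_apply, h.comp_eq,
      map_iterate h n m a]

theorem isLeftRegular (h : IsDirectLimitAlong Φ g) (hp : IsLeftRegular (p : A)) :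
    IsLeftRegular (p : C) := by
  refine isLeftRegular_of_non_zero_divisor _ fun x hx => ?_
  obtain ⟨n, a, rfl⟩ := h.exists_eq x
  obtain ⟨m, hm⟩ := h.exists_iterate_eq_zero n (p * a) (by rwa [map_mul, map_natCast])
  rw [← RingHom.coe_pow, map_mul, map_natCast, hp.mul_left_eq_zero_iff] at hm
  rw [← h.map_iterate n m, ← RingHom.coe_pow, hm, map_zero]

theorem dvd_of_dvd_map (h : IsDirectLimitAlong Φ g)
    (hΦ : ∀ a, (p : A) ∣ Φ a → (p : A) ∣ a) {n : ℕ} {a : A} (ha : (p : C) ∣ g n a) :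
    (p : A) ∣ a := by
  obtain ⟨c, hc⟩ := ha
  obtain ⟨r, d, rfl⟩ := h.exists_eq c
  have hsame : g (n + r) (Φ^[r] a - p * Φ^[n] d) = 0 := by
    rw [map_sub, map_mul, map_natCast, h.map_iterate, add_comm, h.map_iterate, hc, sub_self]
  obtain ⟨l, hl⟩ := h.exists_iterate_eq_zero _ _ hsame
  rw [← RingHom.coe_pow, map_sub, map_mul, map_natCast, sub_eq_zero, RingHom.coe_pow,
    ← Function.iterate_add_apply] at hl
  exact dvd_of_dvd_iterate hΦ (l + r) ⟨_, hl⟩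

theorem totallyIntegrallyClosedAwayP (h : IsDirectLimitAlong Φ g)
    (hΦ : ∀ a, (p : A) ∣ Φ a → (p : A) ∣ a) (hp : IsLeftRegular (p : A))
    (hA : TotallyIntegrallyClosedAwayP p A) : TotallyIntegrallyClosedAwayP p C := by
  refine (totallyIntegrallyClosedAwayP_iff (h.isLeftRegular hp)).mpr fun x s N hx => ?_
  obtain ⟨n, a, rfl⟩ := h.exists_eq x
  have hdvd : ∀ {m : ℕ} {b : A}, (p : C) ^ m ∣ g n b → (p : A) ^ m ∣ b :=
    pow_dvd_of_pow_dvd_map (g n) (h.isLeftRegular hp) (fun _ => h.dvd_of_dvd_map hΦ) _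
  have ha : (p : A) ^ s ∣ a := hA.pow_dvd hp N fun k => hdvd (by simpa using hx k)
  simpa using map_dvd (g n) ha

end IsDirectLimitAlong

end DirectLimit

namespace AdicCompletion

variable {R : Type*} [CommRing R]

theorem mkₐ_surjective (I : Ideal R) : Function.Surjective (mkₐ I) :=
  mk_surjective I R

theorem evalₐ_mkₐ_of_le {I : Ideal R} (f : AdicCauchySequence I R) {t n : ℕ} (h : t ≤ n) :
    evalₐ I t (mkₐ I f) = Ideal.Quotient.mk _ (f n) := by
  rw [evalₐ_mkₐ]
  exact (Ideal.mk_eq_mk _ h f).symm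

variable {a : R}

theorem evalₐ_eq_zero_of_pow_dvd {t : ℕ} {z : AdicCompletion (Ideal.span {a}) R}
    (hz : algebraMap R _ a ^ t ∣ z) : evalₐ (Ideal.span {a}) t z = 0 := by
  obtain ⟨y, rfl⟩ := hz
  rw [map_mul, map_pow, AlgHom.commutes, Ideal.Quotient.algebraMap_eq, ← map_pow,
    Ideal.Quotient.eq_zero_iff_mem.mpr
      (Ideal.pow_mem_pow (Ideal.mem_span_singleton_self a) t), zero_mul]

theorem pow_dvd_apply_of_pow_dvd_mkₐ {f : AdicCauchySequence (Ideal.span {a}) R} {t n : ℕ}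
    (hf : algebraMap R _ a ^ t ∣ mkₐ (Ideal.span {a}) f) (h : t ≤ n) : a ^ t ∣ f n := by
  rw [← Ideal.mem_span_singleton, ← Ideal.span_singleton_pow,
    ← Ideal.Quotient.eq_zero_iff_mem, ← evalₐ_mkₐ_of_le f h]
  exact evalₐ_eq_zero_of_pow_dvd hf

theorem pow_dvd_mkₐ_of_eventually (ha : IsLeftRegular a)
    {f : AdicCauchySequence (Ideal.span {a}) R} {t : ℕ}
    (hf : ∀ᶠ n in Filter.atTop, a ^ t ∣ f n) :
    algebraMap R _ a ^ t ∣ mkₐ (Ideal.span {a}) f := by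
  obtain ⟨K, hK⟩ := Filter.eventually_atTop.mp hf
  choose y hy using fun j => hK (j + (K + t)) (by omega)
  have hmem {j : ℕ} {w : R} :
      w ∈ (Ideal.span {a} ^ j • ⊤ : Submodule R R) ↔ a ^ j ∣ w := by
    simp [Ideal.span_singleton_pow, Ideal.mem_span_singleton]
  have hcauchy : ∀ j, y j ≡ y (j + 1) [SMOD (Ideal.span {a} ^ j • ⊤ : Submodule R R)] := by
    intro j
    have hf' := SModEq.sub_mem.mp (f.property (show j + (K + t) ≤ j + 1 + (K + t) by omega))
    rw [hmem, hy, hy, ← mul_sub] at hf'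
    rw [SModEq.sub_mem, hmem, ← (ha.pow t).dvd_cancel_left, ← pow_add]
    exact (pow_dvd_pow _ (by omega)).trans hf'
  refine ⟨mkₐ _ (AdicCauchySequence.mk _ R y hcauchy), ext_evalₐ fun n => ?_⟩
  rw [evalₐ_mkₐ_of_le f (n.le_add_right (K + t)), hy, map_mul, map_mul, map_pow, map_pow,
    AlgHom.commutes, evalₐ_mkₐ]
  rfl

theorem isLeftRegular_algebraMap (ha : IsLeftRegular a) :
    IsLeftRegular (algebraMap R (AdicCompletion (Ideal.span {a}) R) a) := by
  refine isLeftRegular_of_non_zero_divisor _ fun x hx => ext_evalₐ fun n => ?_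
  obtain ⟨f, rfl⟩ := mkₐ_surjective (Ideal.span {a}) x
  have hdvd : a ^ (n + 1) ∣ a * f (n + 1) := by
    rw [← AlgHom.commutes (mkₐ (Ideal.span {a})), ← map_mul] at hx
    exact pow_dvd_apply_of_pow_dvd_mkₐ (hx ▸ dvd_zero _) le_rfl
  rw [pow_succ', ha.dvd_cancel_left, ← Ideal.mem_span_singleton, ← Ideal.span_singleton_pow,
    ← Ideal.Quotient.eq_zero_iff_mem] at hdvd
  rw [evalₐ_mkₐ_of_le f n.le_succ, hdvd, _root_.map_zero]

end AdicCompletion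

section AdicCompletionAwayP

open AdicCompletion

variable {R : Type*} [CommRing R] {p : ℕ}

local notation "R̂" => AdicCompletion (Ideal.span {(p : R)}) R

theorem isLeftRegular_natCast_adicCompletion (hp : IsLeftRegular (p : R)) :
    IsLeftRegular (p : R̂) :=
  map_natCast (algebraMap R R̂) p ▸ isLeftRegular_algebraMap hp

namespace TotallyIntegrallyClosedAwayP

theorem pow_dvd_of_pow_dvd_pow_adicCompletion (h : TotallyIntegrallyClosedAwayP p R)
    (hp : IsLeftRegular (p : R)) {x : R̂} {t q : ℕ} (hq : q ≠ 0)
    (hx : (p : R̂) ^ (t * q) ∣ x ^ q) : (p : R̂) ^ t ∣ x := by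
  obtain ⟨f, rfl⟩ := mkₐ_surjective _ x
  rw [← map_pow] at hx
  rw [← map_natCast (algebraMap R R̂)] at hx ⊢
  exact pow_dvd_mkₐ_of_eventually hp <| Filter.eventually_atTop.mpr
    ⟨t * q, fun n hn => h.pow_dvd_of_pow_dvd_pow hp hq (pow_dvd_apply_of_pow_dvd_mkₐ hx hn)⟩

theorem adicCompletion (h : TotallyIntegrallyClosedAwayP p R) (hp : IsLeftRegular (p : R))
    (hp1 : 1 < p) {ϖ : ℕ → R} (hϖ : ∀ k, ϖ k ^ p ^ k = p) :
    TotallyIntegrallyClosedAwayP p R̂ := by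
  refine (totallyIntegrallyClosedAwayP_iff (isLeftRegular_natCast_adicCompletion hp)).mpr
    fun x s N hx => ?_
  have hroot : ∀ k, (p : R̂) ^ s ∣ algebraMap R R̂ (ϖ k ^ N) * x := fun k =>
    h.pow_dvd_of_pow_dvd_pow_adicCompletion hp (pow_ne_zero k (show p ≠ 0 by omega)) <| by
      rw [mul_pow, ← map_pow, pow_right_comm, hϖ, map_pow, map_natCast]
      exact hx _
  obtain ⟨f, rfl⟩ := mkₐ_surjective _ x
  rw [← map_natCast (algebraMap R R̂)] at hroot ⊢
  refine pow_dvd_mkₐ_of_eventually hp <| Filter.eventually_atTop.mpr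
    ⟨s, fun n hn => h.pow_dvd_of_forall_pow_dvd_root_mul hp hp1 hϖ (N := N) fun k => ?_⟩
  have hk := hroot k
  rw [← AlgHom.commutes (mkₐ _) (ϖ k ^ N), ← map_mul] at hk
  exact pow_dvd_apply_of_pow_dvd_mkₐ hk hn

end TotallyIntegrallyClosedAwayP

end AdicCompletionAwayP

theorem pow_pow_eq_of_pow_succ_eq {R : Type*} [Monoid R] {p : ℕ} {π : ℕ → R}
    (hπ : ∀ n, π (n + 1) ^ p = π n) : ∀ k, π k ^ p ^ k = π 0
  | 0 => pow_one _
  | k + 1 => by rw [pow_succ', pow_mul, hπ, pow_pow_eq_of_pow_succ_eq hπ k]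

theorem stmt_16_general (p : ℕ) (hp : p.Prime)
    (A : Type*) [CommRing A]
    (htf : ∀ a : A, (p : A) * a = 0 → a = 0)
    (π : ℕ → A) (hπ0 : π 0 = (p : A)) (hπ : ∀ n, (π (n + 1)) ^ p = π n)
    (Φ : A →+* A)
    (hΦinj : ∀ a : A, (∃ c, Φ a = (p : A) * c) → ∃ c, a = (p : A) * c)
    (htic : TotallyIntegrallyClosedAwayP p A)
    (C : Type*) [CommRing C] (g : ℕ → (A →+* C))
    (hcomp : ∀ n, (g (n + 1)).comp Φ = g n)
    (hsurj : ∀ x : C, ∃ n a, g n a = x)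
    (hker : ∀ n (a : A), g n a = 0 → ∃ m, Φ^[m] a = 0) :
    (∀ x : AdicCompletion (Ideal.span {(p : C)}) C,
      (p : AdicCompletion (Ideal.span {(p : C)}) C) * x = 0 → x = 0) ∧
    TotallyIntegrallyClosedAwayP p (AdicCompletion (Ideal.span {(p : C)}) C) := by
  have hpA : IsLeftRegular (p : A) := isLeftRegular_of_non_zero_divisor _ htf
  have hC : IsDirectLimitAlong Φ g := ⟨hcomp, hsurj, hker⟩
  have hpC : IsLeftRegular (p : C) := hC.isLeftRegular hpA
  have hroots : ∀ k, g 0 (π k) ^ p ^ k = p := fun k => by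
    rw [← map_pow, pow_pow_eq_of_pow_succ_eq hπ, hπ0, map_natCast]
  exact ⟨fun x => (isLeftRegular_natCast_adicCompletion hpC).mul_left_eq_zero_iff.mp,
    (hC.totallyIntegrallyClosedAwayP hΦinj hpA htic).adicCompletion hpC hp.one_lt hroots⟩

/-- let `A` be p-torsion free, p-adically separated, with a compatible
system `π` of p-power roots of `p`, equipped with an endomorphism `Φ` fixing the
`π n` and injective mod `p`, and totally integrally closed in `A[1/p]`.  If `C` is
the direct limit of `A` along `Φ` (axiomatized by the cocone `g`), then the p-adic
completion `Ĉ` of `C` is p-torsion free and totally integrally closed in `Ĉ[1/p]`. -/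
theorem stmt_16 (p : ℕ) (hp : p.Prime) (hodd : p ≠ 2)
    (A : Type*) [CommRing A]
    (htf : ∀ a : A, (p : A) * a = 0 → a = 0)
    (hsep : ∀ a : A, (∀ n : ℕ, ∃ c : A, a = (p : A) ^ n * c) → a = 0)
    (π : ℕ → A) (hπ0 : π 0 = (p : A)) (hπ : ∀ n, (π (n + 1)) ^ p = π n)
    (Φ : A →+* A) (hΦπ : ∀ n, Φ (π n) = π n)
    (hΦinj : ∀ a : A, (∃ c, Φ a = (p : A) * c) → ∃ c, a = (p : A) * c)
    (htic : TotallyIntegrallyClosedAwayP p A)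
    (C : Type*) [CommRing C] (g : ℕ → (A →+* C))
    (hcomp : ∀ n, (g (n + 1)).comp Φ = g n)
    (hsurj : ∀ x : C, ∃ n a, g n a = x)
    (hker : ∀ n (a : A), g n a = 0 → ∃ m, Φ^[m] a = 0) :
    (∀ x : AdicCompletion (Ideal.span {(p : C)}) C,
      (p : AdicCompletion (Ideal.span {(p : C)}) C) * x = 0 → x = 0) ∧
    TotallyIntegrallyClosedAwayP p (AdicCompletion (Ideal.span {(p : C)}) C) :=
  stmt_16_general p hp A htf π hπ0 hπ Φ hΦinj htic C g hcomp hsurj hker
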